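/- Let A be an r×n integer matrix of rank r with no column of zeros, and let H = HNF(A). Then A is decomposable if and only if the symmetric matrix HᵀH ∈ ℤ^{n×n} is reducible. -/

import Mathlib

/-!
Both conditions amount to a splitting of the columns into two nonempty classes `J`, `Jᶜ` such
that every row of `H` is supported in one class. If `HᵀH` is reducible along `J`, the
orthogonality of the columns `piv i` and `c` from different classes, read row by row down the
echelon form, kills the entry `H i c`. If `A` (equivalently `H`) is decomposable, each row of `H`
is the sum of two vectors of its row lattice supported on `J` and `Jᶜ`; the one on the side away
from the row's pivot is reduced modulo every pivot of `H`, hence zero. Conversely, separated rows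
give a block decomposition after permuting rows and columns, and the absence of zero columns
makes both blocks nontrivial.
-/

open Matrix

/-- `M` is block-diagonal with a top-left `k × l` block and a complementary
bottom-right block: all entries outside these two blocks vanish. -/
def IsBlockSplit {m n : ℕ} (M : Matrix (Fin m) (Fin n) ℤ) (k l : ℕ) : Prop :=
  ∀ (i : Fin m) (j : Fin n),
    (((i : ℕ) < k ∧ l ≤ (j : ℕ)) ∨ (k ≤ (i : ℕ) ∧ (j : ℕ) < l)) → M i j = 0

/-- An integer matrix is decomposable if, after multiplying by the inverse of a
unimodular matrix on the left and a permutation matrix on the right, it becomes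
a nontrivial block-diagonal direct sum. -/
def Decomposable {m n : ℕ} (A : Matrix (Fin m) (Fin n) ℤ) : Prop :=
  ∃ (P : Matrix (Fin m) (Fin m) ℤ) (σ : Equiv.Perm (Fin n)) (k l : ℕ),
    IsUnit P.det ∧ 0 < k ∧ k < m ∧ 0 < l ∧ l < n ∧
      IsBlockSplit (P⁻¹ * A * σ.permMatrix ℤ) k l

/-- A square integer matrix is reducible if conjugating by a permutation matrix
makes it a nontrivial block-diagonal direct sum of square matrices. -/
def Reducible {n : ℕ} (B : Matrix (Fin n) (Fin n) ℤ) : Prop :=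
  ∃ (σ : Equiv.Perm (Fin n)) (s : ℕ), 0 < s ∧ s < n ∧
    IsBlockSplit ((σ.permMatrix ℤ)ᵀ * B * σ.permMatrix ℤ) s s

/-- Hermite normal form: row echelon with positive pivots strictly dominating the
nonnegative entries above them, and zero rows at the bottom. -/
def IsHermiteNormalForm {m n : ℕ} (H : Matrix (Fin m) (Fin n) ℤ) : Prop :=
  ∃ (r : ℕ) (hr : r ≤ m) (piv : Fin r → Fin n),
    StrictMono piv ∧
    (∀ (i : Fin r) (j : Fin n), (j : ℕ) < (piv i : ℕ) → H (Fin.castLE hr i) j = 0) ∧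
    (∀ i : Fin r, 0 < H (Fin.castLE hr i) (piv i)) ∧
    (∀ k i : Fin r, k < i →
      0 ≤ H (Fin.castLE hr k) (piv i) ∧
        H (Fin.castLE hr k) (piv i) < H (Fin.castLE hr i) (piv i)) ∧
    (∀ i : Fin m, r ≤ (i : ℕ) → ∀ j, H i j = 0)

/-- `H` is the Hermite normal form of `A`. -/
def IsHNFOf {m n : ℕ} (H A : Matrix (Fin m) (Fin n) ℤ) : Prop :=
  IsHermiteNormalForm H ∧ ∃ P : Matrix (Fin m) (Fin m) ℤ, IsUnit P.det ∧ A = P * H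

/-- Rank of an integer matrix, computed over `ℚ`. -/
noncomputable def rankQ {m n : ℕ} (A : Matrix (Fin m) (Fin n) ℤ) : ℕ :=
  (A.map (Int.cast : ℤ → ℚ)).rank

open Finset

namespace Matrix

theorem inv_permMatrix {n R : Type*} [DecidableEq n] [Fintype n] [CommRing R]
    (σ : Equiv.Perm n) : (σ.permMatrix R)⁻¹ = (σ⁻¹).permMatrix R :=
  inv_eq_left_inv (by rw [← permMatrix_mul, mul_inv_cancel, permMatrix_one])

theorem permMatrix_mul_mul_permMatrix_apply {m n R : Type*} [DecidableEq m] [Fintype m]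
    [DecidableEq n] [Fintype n] [NonAssocSemiring R] (σ : Equiv.Perm m) (τ : Equiv.Perm n)
    (M : Matrix m n R) (i : m) (j : n) :
    (σ.permMatrix R * M * τ.permMatrix R) i j = M (σ i) (τ.symm j) := by
  simp [PEquiv.toMatrix_toPEquiv_mul, PEquiv.mul_toMatrix_toPEquiv]

end Matrix

theorem Fin.exists_perm_mem_iff_lt_card {n : ℕ} (s : Finset (Fin n)) :
    ∃ σ : Equiv.Perm (Fin n), ∀ i, i ∈ s ↔ (σ i : ℕ) < #s := by
  have hcard : Fintype.card s = Fintype.card {i : Fin n // (i : ℕ) < #s} := by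
    rw [Fintype.card_coe, Fintype.card_subtype, Fin.card_filter_val_lt,
      min_eq_right (card_le_univ s |>.trans_eq (Fintype.card_fin n))]
  let e := Fintype.equivOfCardEq hcard
  exact ⟨e.extendSubtype, fun i =>
    ⟨e.extendSubtype_mem i, not_imp_not.mp (e.extendSubtype_not_mem i)⟩⟩

theorem Decomposable.unimodular_mul {m n : ℕ} {P : Matrix (Fin m) (Fin m) ℤ}
    {M : Matrix (Fin m) (Fin n) ℤ} (hP : IsUnit P.det) (h : Decomposable M) :
    Decomposable (P * M) := by
  obtain ⟨Q, σ, k, l, hQ, hk, hkm, hl, hln, hsplit⟩ := h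
  refine ⟨P * Q, σ, k, l, by rw [det_mul]; exact hP.mul hQ, hk, hkm, hl, hln, ?_⟩
  rwa [Matrix.mul_inv_rev, Matrix.mul_assoc Q⁻¹, ← Matrix.mul_assoc P⁻¹,
    Matrix.nonsing_inv_mul P hP, Matrix.one_mul]

theorem decomposable_unimodular_mul_iff {m n : ℕ} {P : Matrix (Fin m) (Fin m) ℤ}
    {M : Matrix (Fin m) (Fin n) ℤ} (hP : IsUnit P.det) :
    Decomposable (P * M) ↔ Decomposable M := by
  refine ⟨fun h => ?_, Decomposable.unimodular_mul hP⟩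
  simpa [← Matrix.mul_assoc, Matrix.nonsing_inv_mul P hP] using
    h.unimodular_mul (P := P⁻¹) (isUnit_nonsing_inv_det P hP)

theorem reducible_iff_exists_finset {n : ℕ} (G : Matrix (Fin n) (Fin n) ℤ) :
    Reducible G ↔ ∃ J : Finset (Fin n), J.Nonempty ∧ Jᶜ.Nonempty ∧
      ∀ c c', (c ∈ J ↔ c' ∉ J) → G c c' = 0 := by
  have hconj : ∀ (σ : Equiv.Perm (Fin n)) u v,
      ((σ.permMatrix ℤ)ᵀ * G * σ.permMatrix ℤ) u v = G (σ.symm u) (σ.symm v) := by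
    intro σ u v
    rw [transpose_permMatrix, permMatrix_mul_mul_permMatrix_apply]
    rfl
  constructor
  · rintro ⟨σ, s, hs, hsn, hsplit⟩
    refine ⟨univ.filter fun c => (σ c : ℕ) < s, ⟨σ.symm ⟨0, hs.trans hsn⟩, by simpa⟩,
      ⟨σ.symm ⟨s, hsn⟩, by simp⟩, fun c c' hcc' => ?_⟩
    have := hsplit (σ c) (σ c')
    simp only [hconj, Equiv.symm_apply_apply] at this
    simp only [mem_filter, mem_univ, true_and] at hcc'
    exact this (by omega)
  · rintro ⟨J, hJ, hJc, hG⟩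
    obtain ⟨σ, hσ⟩ := Fin.exists_perm_mem_iff_lt_card J
    refine ⟨σ, #J, card_pos.mpr hJ, ?_, fun u v huv => ?_⟩
    · simpa [card_compl] using card_pos.mpr hJc
    · rw [hconj]
      apply hG
      simp only [hσ, Equiv.apply_symm_apply]
      omega

def RowsSeparate {m n R : Type*} [Zero R] (M : Matrix m n R) (J : Finset n) : Prop :=
  ∀ i, (∀ c ∈ J, M i c = 0) ∨ (∀ c ∉ J, M i c = 0)

theorem RowsSeparate.transpose_mul_self_apply_eq_zero {m n R : Type*} [Fintype m]
    [NonUnitalNonAssocSemiring R] {M : Matrix m n R} {J : Finset n} (h : RowsSeparate M J)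
    {c c' : n} (hcc' : c ∈ J ↔ c' ∉ J) : (Mᵀ * M) c c' = 0 := by
  rw [mul_apply]
  refine sum_eq_zero fun i _ => ?_
  rw [transpose_apply]
  by_cases hc : c ∈ J
  · rcases h i with hi | hi
    · rw [hi c hc, zero_mul]
    · rw [hi c' (hcc'.mp hc), mul_zero]
  · rcases h i with hi | hi
    · rw [hi c' (by tauto), mul_zero]
    · rw [hi c hc, zero_mul]

theorem RowsSeparate.decomposable {m n : ℕ} {M : Matrix (Fin m) (Fin n) ℤ} {J : Finset (Fin n)}
    (h : RowsSeparate M J) (hcol : ∀ j, ∃ i, M i j ≠ 0) (hJ : J.Nonempty) (hJc : Jᶜ.Nonempty) :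
    Decomposable M := by
  classical
  -- the rows that do not vanish on `J` are sorted first
  let R : Finset (Fin m) := univ.filter fun i => ∃ c ∈ J, M i c ≠ 0
  have hmemR : ∀ i, i ∈ R ↔ ∃ c ∈ J, M i c ≠ 0 := by simp [R]
  have hoff : ∀ i ∈ R, ∀ c ∉ J, M i c = 0 := fun i hi => by
    obtain ⟨c, hc, hne⟩ := (hmemR i).mp hi
    exact (h i).resolve_left fun hJ0 => hne (hJ0 c hc)
  obtain ⟨ρ, hρ⟩ := Fin.exists_perm_mem_iff_lt_card R
  obtain ⟨τ, hτ⟩ := Fin.exists_perm_mem_iff_lt_card J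
  have hR : R.Nonempty := by
    obtain ⟨c, hc⟩ := hJ
    obtain ⟨i, hi⟩ := hcol c
    exact ⟨i, (hmemR i).mpr ⟨c, hc, hi⟩⟩
  have hRc : Rᶜ.Nonempty := by
    obtain ⟨c, hc⟩ := hJc
    obtain ⟨i, hi⟩ := hcol c
    exact ⟨i, mem_compl.mpr fun hiR => hi (hoff i hiR c (mem_compl.mp hc))⟩
  refine ⟨ρ.permMatrix ℤ, τ, #R, #J, ?_, card_pos.mpr hR, ?_, card_pos.mpr hJ, ?_,
    fun u v huv => ?_⟩
  · simp
  · simpa [card_compl] using card_pos.mpr hRc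
  · simpa [card_compl] using card_pos.mpr hJc
  · rw [inv_permMatrix, permMatrix_mul_mul_permMatrix_apply, Equiv.Perm.inv_def]
    have hi := hρ (ρ.symm u)
    have hc := hτ (τ.symm v)
    rw [Equiv.apply_symm_apply] at hi hc
    rcases huv with ⟨hu, hv⟩ | ⟨hu, hv⟩
    · exact hoff _ (hi.mpr hu) _ (mt hc.mp (by omega))
    · have hiR : ρ.symm u ∉ R := mt hi.mp (by omega)
      exact not_not.mp fun hne => hiR ((hmemR _).mpr ⟨_, hc.mpr hv, hne⟩)

theorem Decomposable.exists_split {m n : ℕ} {M : Matrix (Fin m) (Fin n) ℤ}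
    (h : Decomposable M) :
    ∃ J : Finset (Fin n), J.Nonempty ∧ Jᶜ.Nonempty ∧ ∃ C D : Matrix (Fin m) (Fin m) ℤ,
      C + D = 1 ∧ (∀ i, ∀ c ∉ J, (C * M) i c = 0) ∧ (∀ i, ∀ c ∈ J, (D * M) i c = 0) := by
  obtain ⟨P, σ, k, l, hP, -, -, hl, hln, hsplit⟩ := h
  have hB : ∀ u c, (P⁻¹ * M) u c = (P⁻¹ * M * σ.permMatrix ℤ) u (σ c) := by
    intro u c
    rw [PEquiv.mul_toMatrix_toPEquiv, submatrix_apply, id, Equiv.symm_apply_apply]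
  have hvanish : ∀ (d : Fin m → ℤ) (S : Finset (Fin n)),
      (∀ u, ∀ c ∈ S, d u * (P⁻¹ * M) u c = 0) →
        ∀ i, ∀ c ∈ S, (P * diagonal d * P⁻¹ * M) i c = 0 := by
    intro d S hd i c hc
    rw [Matrix.mul_assoc, Matrix.mul_assoc, mul_apply]
    exact sum_eq_zero fun u _ => by rw [diagonal_mul, hd u c hc, mul_zero]
  let J : Finset (Fin n) := univ.filter fun c => (σ c : ℕ) < l
  let E : Matrix (Fin m) (Fin m) ℤ := diagonal fun u => if (u : ℕ) < k then 1 else 0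
  let E' : Matrix (Fin m) (Fin m) ℤ := diagonal fun u => if (u : ℕ) < k then 0 else 1
  have hEE' : E + E' = 1 := by
    rw [diagonal_add, ← diagonal_one]
    congr 1 with u
    split_ifs <;> rfl
  refine ⟨J, ⟨σ.symm ⟨0, hl.trans hln⟩, by simpa [J]⟩, ⟨σ.symm ⟨l, hln⟩, by simp [J]⟩,
    P * E * P⁻¹, P * E' * P⁻¹, ?_, ?_, ?_⟩
  · rw [← Matrix.add_mul, ← Matrix.mul_add, hEE', Matrix.mul_one, mul_nonsing_inv P hP]
  · intro i c hc
    refine hvanish _ Jᶜ (fun u c hc => ?_) i c (mem_compl.mpr hc)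
    simp only [J, mem_compl, mem_filter, mem_univ, true_and, not_lt] at hc
    split_ifs with hu
    · rw [hB, hsplit u (σ c) (Or.inl ⟨hu, hc⟩), mul_zero]
    · rw [zero_mul]
  · refine hvanish _ J fun u c hc => ?_
    simp only [J, mem_filter, mem_univ, true_and] at hc
    split_ifs with hu
    · rw [zero_mul]
    · rw [hB, hsplit u (σ c) (Or.inr ⟨not_lt.mp hu, hc⟩), mul_zero]

structure HermitePivots {m n : ℕ} (H : Matrix (Fin m) (Fin n) ℤ) where
  rank : ℕ
  rank_le : rank ≤ m
  piv : Fin rank → Fin n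
  piv_strictMono : StrictMono piv
  apply_eq_zero_of_lt_piv :
    ∀ (i : Fin rank) (j : Fin n), (j : ℕ) < piv i → H (Fin.castLE rank_le i) j = 0
  apply_piv_pos : ∀ i, 0 < H (Fin.castLE rank_le i) (piv i)
  apply_piv_reduced : ∀ k i, k < i →
    0 ≤ H (Fin.castLE rank_le k) (piv i) ∧
      H (Fin.castLE rank_le k) (piv i) < H (Fin.castLE rank_le i) (piv i)
  row_eq_zero : ∀ i : Fin m, rank ≤ i → ∀ j, H i j = 0

theorem IsHermiteNormalForm.nonempty_hermitePivots {m n : ℕ} {H : Matrix (Fin m) (Fin n) ℤ}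
    (hH : IsHermiteNormalForm H) : Nonempty (HermitePivots H) :=
  let ⟨r, hr, piv, hmono, hlt, hpos, hred, hzero⟩ := hH
  ⟨⟨r, hr, piv, hmono, hlt, hpos, hred, hzero⟩⟩

namespace HermitePivots

variable {m n : ℕ} {H : Matrix (Fin m) (Fin n) ℤ} (h : HermitePivots H)

theorem exists_castLE_eq_or_row_eq_zero (u : Fin m) :
    (∃ i, Fin.castLE h.rank_le i = u) ∨ ∀ j, H u j = 0 := by
  by_cases hu : (u : ℕ) < h.rank
  · exact Or.inl ⟨⟨u, hu⟩, rfl⟩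
  · exact Or.inr (h.row_eq_zero u (not_lt.mp hu))

theorem rowsSeparate_of_forall {J : Finset (Fin n)}
    (hpiv : ∀ i c, (c ∈ J ↔ h.piv i ∉ J) → H (Fin.castLE h.rank_le i) c = 0) :
    RowsSeparate H J := by
  intro u
  obtain ⟨i, rfl⟩ | hu := h.exists_castLE_eq_or_row_eq_zero u
  · by_cases hi : h.piv i ∈ J
    · exact Or.inr fun c hc => hpiv i c (by tauto)
    · exact Or.inl fun c hc => hpiv i c (by tauto)
  · exact Or.inl fun c _ => hu c

/-- Below a pivot only zeros occur, so a column sum at `piv i` sees only the rows up to `i`. -/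
theorem sum_mul_apply_piv (f : Fin m → ℤ) (i : Fin h.rank)
    (hf : ∀ k < i, f (Fin.castLE h.rank_le k) * H (Fin.castLE h.rank_le k) (h.piv i) = 0) :
    ∑ u, f u * H u (h.piv i) =
      f (Fin.castLE h.rank_le i) * H (Fin.castLE h.rank_le i) (h.piv i) := by
  refine sum_eq_single _ (fun u _ hu => ?_) (by simp)
  obtain ⟨k, rfl⟩ | hu0 := h.exists_castLE_eq_or_row_eq_zero u
  · rcases lt_or_gt_of_ne (fun hki : k = i => hu (hki ▸ rfl)) with hki | hki
    · exact hf k hki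
    · rw [h.apply_eq_zero_of_lt_piv k _ (h.piv_strictMono hki), mul_zero]
  · rw [hu0, mul_zero]

theorem vecMul_eq_zero_of_reduced (γ : Fin m → ℤ)
    (hγ : ∀ i, 0 ≤ (γ ᵥ* H) (h.piv i) ∧
      (γ ᵥ* H) (h.piv i) < H (Fin.castLE h.rank_le i) (h.piv i)) :
    γ ᵥ* H = 0 := by
  have hγ0 : ∀ i, γ (Fin.castLE h.rank_le i) = 0 := by
    intro i
    induction i using WellFoundedLT.induction with
    | _ i ih =>
      have hpos := h.apply_piv_pos i
      have hvi : (γ ᵥ* H) (h.piv i) =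
          γ (Fin.castLE h.rank_le i) * H (Fin.castLE h.rank_le i) (h.piv i) :=
        h.sum_mul_apply_piv γ i fun k hk => by rw [ih k hk, zero_mul]
      obtain ⟨hnonneg, hlt⟩ := hγ i
      rw [hvi] at hnonneg hlt
      have hlt1 : γ (Fin.castLE h.rank_le i) < 1 :=
        lt_of_mul_lt_mul_right (by rwa [one_mul]) hpos.le
      have := nonneg_of_mul_nonneg_left hnonneg hpos
      omega
  ext j
  rw [Pi.zero_apply, vecMul, dotProduct]
  refine sum_eq_zero fun u _ => ?_
  obtain ⟨k, rfl⟩ | hu := h.exists_castLE_eq_or_row_eq_zero u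
  · rw [hγ0, zero_mul]
  · rw [hu, mul_zero]

theorem apply_eq_zero_of_split {J : Finset (Fin n)} {C D : Matrix (Fin m) (Fin m) ℤ}
    (hCD : C + D = 1) (hC : ∀ i, ∀ c ∉ J, (C * H) i c = 0)
    (hD : ∀ i, ∀ c ∈ J, (D * H) i c = 0) {i : Fin h.rank} (hi : h.piv i ∈ J) {c : Fin n}
    (hc : c ∉ J) : H (Fin.castLE h.rank_le i) c = 0 := by
  have hrow : ∀ j, H (Fin.castLE h.rank_le i) j =
      (C * H) (Fin.castLE h.rank_le i) j + (D * H) (Fin.castLE h.rank_le i) j := by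
    intro j
    rw [← Matrix.add_apply, ← Matrix.add_mul, hCD, Matrix.one_mul]
  -- `D * H` has the same row lattice as `H`, and its rows are reduced modulo every pivot
  have hDrow : (D * H) (Fin.castLE h.rank_le i) = 0 := by
    rw [mul_apply_eq_vecMul]
    refine h.vecMul_eq_zero_of_reduced _ fun k => ?_
    rw [← mul_apply_eq_vecMul]
    by_cases hk : h.piv k ∈ J
    · rw [hD _ _ hk]
      exact ⟨le_rfl, h.apply_piv_pos k⟩
    · have hkrow : (D * H) (Fin.castLE h.rank_le i) (h.piv k) =
          H (Fin.castLE h.rank_le i) (h.piv k) := by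
        rw [hrow, hC _ _ hk, zero_add]
      rw [hkrow]
      rcases lt_trichotomy k i with hki | rfl | hki
      · rw [h.apply_eq_zero_of_lt_piv _ _ (h.piv_strictMono hki)]
        exact ⟨le_rfl, h.apply_piv_pos k⟩
      · exact absurd hi hk
      · exact h.apply_piv_reduced i k hki
  rw [hrow, hC _ _ hc, hDrow, Pi.zero_apply, add_zero]

end HermitePivots

theorem IsHermiteNormalForm.rowsSeparate_of_split {m n : ℕ} {H : Matrix (Fin m) (Fin n) ℤ}
    (hH : IsHermiteNormalForm H) {J : Finset (Fin n)} {C D : Matrix (Fin m) (Fin m) ℤ}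
    (hCD : C + D = 1) (hC : ∀ i, ∀ c ∉ J, (C * H) i c = 0)
    (hD : ∀ i, ∀ c ∈ J, (D * H) i c = 0) : RowsSeparate H J := by
  obtain ⟨h⟩ := hH.nonempty_hermitePivots
  refine h.rowsSeparate_of_forall fun i c hc => ?_
  by_cases hi : h.piv i ∈ J
  · exact h.apply_eq_zero_of_split hCD hC hD hi (by tauto)
  · exact h.apply_eq_zero_of_split (J := Jᶜ) ((add_comm D C).trans hCD)
      (fun u c hc => hD u c (notMem_compl.mp hc)) (fun u c hc => hC u c (mem_compl.mp hc))
      (mem_compl.mpr hi) (notMem_compl.mpr (hc.mpr hi))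

theorem IsHermiteNormalForm.rowsSeparate_of_transpose_mul_self {m n : ℕ}
    {H : Matrix (Fin m) (Fin n) ℤ} (hH : IsHermiteNormalForm H) {J : Finset (Fin n)}
    (hG : ∀ c c', (c ∈ J ↔ c' ∉ J) → (Hᵀ * H) c c' = 0) : RowsSeparate H J := by
  obtain ⟨h⟩ := hH.nonempty_hermitePivots
  refine h.rowsSeparate_of_forall fun i => ?_
  induction i using WellFoundedLT.induction with
  | _ i ih =>
    intro c hc
    -- earlier rows are already known to be separated, so they contribute nothing
    have hsum : ∑ u, H u c * H u (h.piv i) =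
        H (Fin.castLE h.rank_le i) c * H (Fin.castLE h.rank_le i) (h.piv i) :=
      h.sum_mul_apply_piv (H · c) i fun k hk => by
        by_cases hki : h.piv k ∈ J ↔ h.piv i ∈ J
        · rw [ih k hk c (by tauto), zero_mul]
        · rw [ih k hk (h.piv i) (by tauto), mul_zero]
    have h0 := hG c (h.piv i) hc
    simp only [mul_apply, transpose_apply, hsum] at h0
    exact (mul_eq_zero.mp h0).resolve_right (h.apply_piv_pos i).ne'

theorem decomposable_iff_gram_reducible_general {r n : ℕ}
    (A H : Matrix (Fin r) (Fin n) ℤ)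
    (hcol : ∀ j, ∃ i, A i j ≠ 0)
    (hH : IsHNFOf H A) :
    Decomposable A ↔ Reducible (Hᵀ * H) := by
  obtain ⟨hHNF, P, hP, rfl⟩ := hH
  rw [decomposable_unimodular_mul_iff hP, reducible_iff_exists_finset]
  constructor
  · intro hdec
    obtain ⟨J, hJ, hJc, C, D, hCD, hC, hD⟩ := hdec.exists_split
    exact ⟨J, hJ, hJc, fun _ _ =>
      (hHNF.rowsSeparate_of_split hCD hC hD).transpose_mul_self_apply_eq_zero⟩
  · rintro ⟨J, hJ, hJc, hG⟩
    refine (hHNF.rowsSeparate_of_transpose_mul_self hG).decomposable (fun j => ?_) hJ hJc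
    obtain ⟨i, hi⟩ := hcol j
    by_contra! hzero
    exact hi (by rw [mul_apply]; exact sum_eq_zero fun u _ => by rw [hzero u, mul_zero])

/-- for a full row rank integer matrix with no zero column,
decomposability is equivalent to reducibility of `HNF(A)ᵀ · HNF(A)`. -/
theorem decomposable_iff_gram_reducible {r n : ℕ}
    (A H : Matrix (Fin r) (Fin n) ℤ)
    (hrank : rankQ A = r) (hcol : ∀ j, ∃ i, A i j ≠ 0)
    (hH : IsHNFOf H A) :
    Decomposable A ↔ Reducible (Hᵀ * H) :=
  decomposable_iff_gram_reducible_general A H hcol hH
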